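/- If Q = R + S where R and S are real symmetric n×n matrices, Q is positive-definite, and R is positive-semidefinite with 0 as an eigenvalue, then the largest eigenvalue of Q⁻¹S equals 1. -/

import Mathlib

/-! An eigenvector `v` of `Q⁻¹ S` for `μ` satisfies `S v = μ Q v`, hence `R v = (1 - μ) Q v`;
pairing with `v` gives `0 ≤ vᵀ R v = (1 - μ) vᵀ Q v` with `vᵀ Q v > 0`, so `μ ≤ 1`.
A kernel vector of `R` satisfies `S v = Q v`, so `1` is attained. -/

open Matrix

variable {n : Type*} [Fintype n]

theorem Matrix.inv_mul_mulVec_eq_smul_iff [DecidableEq n] {K : Type*} [CommRing K]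
    {Q S : Matrix n n K} (hQ : IsUnit Q.det) (v : n → K) (μ : K) :
    (Q⁻¹ * S) *ᵥ v = μ • v ↔ S *ᵥ v = μ • Q *ᵥ v := by
  rw [← mulVec_mulVec]
  constructor
  · intro h
    simpa [mulVec_mulVec, ← Matrix.mul_assoc, mul_nonsing_inv Q hQ, mulVec_smul] using
      congrArg (Q *ᵥ ·) h
  · intro h
    rw [h, mulVec_smul, mulVec_mulVec, nonsing_inv_mul Q hQ, one_mulVec]

theorem Matrix.le_one_of_mulVec_eq_smul_add_mulVec {R S : Matrix n n ℝ} (hR : R.PosSemidef)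
    (hQ : (R + S).PosDef) {v : n → ℝ} (hv : v ≠ 0) {μ : ℝ}
    (hμ : S *ᵥ v = μ • (R + S) *ᵥ v) : μ ≤ 1 := by
  have hRv : R *ᵥ v = (1 - μ) • (R + S) *ᵥ v := by
    rw [sub_smul, one_smul, ← hμ, add_mulVec, add_sub_cancel_right]
  have hRnn : 0 ≤ (1 - μ) * (v ⬝ᵥ (R + S) *ᵥ v) := by
    simpa [hRv, dotProduct_smul] using hR.dotProduct_mulVec_nonneg v
  have hQpos : 0 < v ⬝ᵥ (R + S) *ᵥ v := by
    simpa using hQ.dotProduct_mulVec_pos hv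
  exact sub_nonneg.mp (nonneg_of_mul_nonneg_left hRnn hQpos)

theorem stmt0_general (n : ℕ) (R S Q : Matrix (Fin n) (Fin n) ℝ)
    (hQ : Q = R + S) (hQpd : Q.PosDef) (hRpsd : R.PosSemidef)
    (hRsing : ∃ v : Fin n → ℝ, v ≠ 0 ∧ R.mulVec v = 0) :
    IsGreatest {μ : ℝ | ∃ v : Fin n → ℝ, v ≠ 0 ∧ (Q⁻¹ * S).mulVec v = μ • v} 1 := by
  subst hQ
  have hdet : IsUnit (R + S).det := isUnit_iff_ne_zero.mpr hQpd.det_pos.ne'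
  constructor
  · obtain ⟨v, hv, hRv⟩ := hRsing
    refine ⟨v, hv, (inv_mul_mulVec_eq_smul_iff hdet v 1).mpr ?_⟩
    rw [one_smul, add_mulVec, hRv, zero_add]
  · rintro μ ⟨v, hv, hμ⟩
    exact le_one_of_mulVec_eq_smul_add_mulVec hRpsd hQpd hv
      ((inv_mul_mulVec_eq_smul_iff hdet v μ).mp hμ)

/-- If `Q = R + S` with `R`, `S` real symmetric, `Q` positive definite, and `R`
positive semidefinite with `0` as an eigenvalue, then the largest eigenvalue of
`Q⁻¹ * S` equals `1`. -/
theorem stmt0 (n : ℕ) (R S Q : Matrix (Fin n) (Fin n) ℝ)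
    (hRsymm : R.IsSymm) (hSsymm : S.IsSymm)
    (hQ : Q = R + S) (hQpd : Q.PosDef) (hRpsd : R.PosSemidef)
    (hRsing : ∃ v : Fin n → ℝ, v ≠ 0 ∧ R.mulVec v = 0) :
    IsGreatest {μ : ℝ | ∃ v : Fin n → ℝ, v ≠ 0 ∧ (Q⁻¹ * S).mulVec v = μ • v} 1 :=
  stmt0_general n R S Q hQ hQpd hRpsd hRsing
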